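/- arXiv:1501.04812 — 3 statements merged into one kernel-verified Lean document; each statement's English description precedes it below -/
import Mathlib

section
/- Let s ∈ ℂ with s ≠ 0, S = [[1,s],[0,1]], Mon = Sᵀ·S⁻¹, and B ∈ SL(2,ℂ). If B·S = S·(Bᵀ)⁻¹ then Mon·B = B·Mon, and conversely if Mon·B = B·Mon then B·S = S·(Bᵀ)⁻¹. -/
open Matrix

/-- For `s ≠ 0`, `S = [[1,s],[0,1]]`, `Mon = Sᵀ·S⁻¹` and `B ∈ SL(2,ℂ)`:
`B·S = S·(Bᵀ)⁻¹` holds if and only if `Mon·B = B·Mon`. -/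
theorem stmt4 (s : ℂ) (hs : s ≠ 0) (S Mon B : Matrix (Fin 2) (Fin 2) ℂ)
    (hS : S = !![1, s; 0, 1]) (hMon : Mon = Sᵀ * S⁻¹) (hB : B.det = 1) :
    B * S = S * (Bᵀ)⁻¹ ↔ Mon * B = B * Mon := by
  obtain ⟨a, b, c, d, rfl⟩ : ∃ a b c d, B = !![a, b; c, d] :=
    ⟨_, _, _, _, Matrix.eta_fin_two B⟩
  subst hS hMon
  rw [Matrix.det_fin_two_of] at hB
  have hSinv : (!![1, s; 0, 1] : Matrix (Fin 2) (Fin 2) ℂ)⁻¹ = !![1, -s; 0, 1] :=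
    Matrix.inv_eq_right_inv (by
      ext i j; fin_cases i <;> fin_cases j <;>
        simp [Matrix.mul_apply, Fin.sum_univ_two, Matrix.one_apply])
  have hT : (!![a, b; c, d] : Matrix (Fin 2) (Fin 2) ℂ)ᵀ = !![a, c; b, d] := by
    ext i j; fin_cases i <;> fin_cases j <;> simp
  have hT2 : (!![1, s; 0, 1] : Matrix (Fin 2) (Fin 2) ℂ)ᵀ = !![1, 0; s, 1] := by
    ext i j; fin_cases i <;> fin_cases j <;> simp
  have hBtinv : (!![a, c; b, d] : Matrix (Fin 2) (Fin 2) ℂ)⁻¹ = !![d, -c; -b, a] :=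
    Matrix.inv_eq_right_inv (by
      ext i j; fin_cases i <;> fin_cases j <;>
        simp [Matrix.mul_apply, Fin.sum_univ_two, Matrix.one_apply] <;>
        (first | ring1! | (ring_nf; linear_combination hB)))
  rw [hT, hT2, hSinv, hBtinv]
  constructor
  · intro h
    have h10 := congrFun (congrFun h 1) 0
    have h11 := congrFun (congrFun h 1) 1
    simp [Matrix.mul_apply, Fin.sum_univ_two] at h10 h11
    -- h10 : c = -b,  h11 : c * s + d = a
    have hc : c = -b := by ring_nf; linear_combination h10
    have hd : d = a + s * b := by ring_nf; linear_combination h11 - s * h10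
    subst hc hd
    ext i j; fin_cases i <;> fin_cases j <;>
      simp [Matrix.mul_apply, Fin.sum_univ_two] <;>
      ring1!
  · intro h
    have h00 := congrFun (congrFun h 0) 0
    have h01 := congrFun (congrFun h 0) 1
    simp [Matrix.mul_apply, Fin.sum_univ_two] at h00 h01
    -- h00 : -(s * c) = b * s,  h01 : b + -(s * d) = -(a * s) + b * (1 - s * s)
    have hc : c = -b := mul_left_cancel₀ hs (by ring_nf; linear_combination -h00)
    have hd : d = a + s * b := mul_left_cancel₀ hs (by ring_nf; linear_combination -h01)
    subst hc hd
    ext i j; fin_cases i <;> fin_cases j <;>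
      simp [Matrix.mul_apply, Fin.sum_univ_two] <;>
      ring1!
end

section
/- If f is a local holomorphic solution of f'' = (f')²/f - f'/x + 4f³ - 4/f near x₀ ∈ ℂ* with f(x₀) = 0 and Taylor expansion f(x) = a₁(x-x₀) + a₂(x-x₀)² + a₃(x-x₀)³ + ⋯, then a₁ = ±2 and a₂ = a₁/(2x₀). -/
/-!
At a zero `x₀ ≠ 0` of `f`, the equation `x f f'' = x f'² - f f' + 4x f⁴ - 4x` reduces to
`x₀ (f'(x₀)² - 4) = 0`, so `f'(x₀) = ±2`. Differentiating the equation once and evaluating at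
`x₀` gives `x₀ f'(x₀) f''(x₀) = 2 x₀ f'(x₀) f''(x₀) - 4`, i.e. `x₀ f'(x₀) f''(x₀) = 4 = f'(x₀)²`,
and dividing by `f'(x₀) ≠ 0` yields `x₀ f''(x₀) = f'(x₀)`.
-/

open Filter Topology

theorem sq_eq_four_of_painleveIII_of_eq_zero {R : Type*} [CommRing R] [IsDomain R]
    {x y y' y'' : R} (hx : x ≠ 0) (hy : y = 0)
    (h : x * y * y'' = x * y' ^ 2 - y * y' + 4 * x * y ^ 4 - 4 * x) : y' ^ 2 = 4 := by
  subst hy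
  exact mul_left_cancel₀ hx (by linear_combination -h)

theorem mul_mul_eq_four_of_painleveIII_of_eq_zero {𝕜 : Type*} [NontriviallyNormedField 𝕜]
    {u v w : 𝕜 → 𝕜} {x₀ : 𝕜}
    (hu : HasDerivAt u (v x₀) x₀) (hv : HasDerivAt v (w x₀) x₀) (hw : DifferentiableAt 𝕜 w x₀)
    (h0 : u x₀ = 0)
    (hode : ∀ᶠ x in 𝓝 x₀,
      x * u x * w x = x * v x ^ 2 - u x * v x + 4 * x * u x ^ 4 - 4 * x) :
    x₀ * v x₀ * w x₀ = 4 := by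
  have hlhs : HasDerivAt (fun x => x * u x * w x) (x₀ * v x₀ * w x₀) x₀ :=
    (((hasDerivAt_id' x₀).fun_mul hu).fun_mul hw.hasDerivAt).congr_deriv (by simp [h0])
  have hrhs : HasDerivAt (fun x => x * v x ^ 2 - u x * v x + 4 * x * u x ^ 4 - 4 * x)
      (2 * x₀ * v x₀ * w x₀ - 4) x₀ :=
    (((((hasDerivAt_id' x₀).fun_mul (hv.fun_pow 2)).sub (hu.fun_mul hv)).add
      (((hasDerivAt_id' x₀).const_mul 4).fun_mul (hu.fun_pow 4))).sub
        ((hasDerivAt_id' x₀).const_mul 4)).congr_deriv (by rw [h0]; ring)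
  linear_combination -hlhs.unique (hrhs.congr_of_eventuallyEq hode)

/-- If `f` is a local holomorphic solution of `P_III(0,0,4,-4)` near `x₀ ∈ ℂ*`
(the equation being taken in the form `x·f·f'' = x·(f')² - f·f' + 4x·f⁴ - 4x`,
valid near `x₀`) with `f(x₀) = 0` and Taylor expansion
`f(x) = a₁(x-x₀) + a₂(x-x₀)² + ⋯`, then `a₁ = ±2` and `a₂ = a₁/(2x₀)`
(equivalently `f''(x₀) = f'(x₀)/x₀`). -/
theorem stmt11 (f : ℂ → ℂ) (x₀ : ℂ) (hx₀ : x₀ ≠ 0)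
    (hf : AnalyticAt ℂ f x₀) (h0 : f x₀ = 0)
    (hode : ∀ᶠ x in nhds x₀,
      x * f x * iteratedDeriv 2 f x =
        x * (deriv f x) ^ 2 - f x * deriv f x + 4 * x * (f x) ^ 4 - 4 * x) :
    (deriv f x₀ = 2 ∨ deriv f x₀ = -2) ∧
      iteratedDeriv 2 f x₀ = deriv f x₀ / x₀ := by
  have hsq : deriv f x₀ ^ 2 = 4 :=
    sq_eq_four_of_painleveIII_of_eq_zero hx₀ h0 hode.self_of_nhds
  have hf' : AnalyticAt ℂ (deriv f) x₀ := hf.deriv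
  rw [iteratedDeriv_succ, iteratedDeriv_one] at hode ⊢
  have hprod : x₀ * deriv f x₀ * deriv (deriv f) x₀ = 4 :=
    mul_mul_eq_four_of_painleveIII_of_eq_zero hf.differentiableAt.hasDerivAt
      hf'.differentiableAt.hasDerivAt hf'.deriv.differentiableAt h0 hode
  have hne : deriv f x₀ ≠ 0 := by
    rintro h
    norm_num [h] at hsq
  refine ⟨sq_eq_sq_iff_eq_or_eq_neg.mp (by linear_combination hsq), ?_⟩
  refine eq_div_of_mul_eq hx₀ (mul_left_cancel₀ hne ?_)
  linear_combination hprod - hsq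
end

section
/- Let f be a solution of P_III(0,0,4,-4) on ℝ_{>0} taking values in i·ℝ_{>0} (purely imaginary positive). Then ψ = 2 log f - πi (a real-valued branch) satisfies (x·d/dx)²ψ = -16 x² sinh(ψ); and f cannot have any point x₀ with ∂ₓf(x₀) = ±2, so f extends to a real-analytic solution on all of ℝ_{>0} without zeros or poles. -/
/-!
Writing `f = i g` with `g = e^{ψ/2} > 0`, the right-hand side of `P_III(0,0,4,-4)` maps the
imaginary axis to itself, so `g` solves the real equation
`g'' = g'²/g - g'/x - 4g³ + 4/g`; substituting `g = e^{ψ/2}` gives the sinh-Gordon equation.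
Moreover `f' = i g'` is purely imaginary, so it never equals `±2`.
-/

open Complex Filter Topology

lemma hasDerivAt_exp_half {ψ : ℝ → ℝ} {x : ℝ} (hψ : DifferentiableAt ℝ ψ x) :
    HasDerivAt (fun t => Real.exp (ψ t / 2)) (Real.exp (ψ x / 2) * (deriv ψ x / 2)) x :=
  (hψ.hasDerivAt.div_const 2).exp

lemma hasDerivAt_I_mul_ofReal {g : ℝ → ℝ} {g' x : ℝ} (hg : HasDerivAt g g' x) :
    HasDerivAt (fun t => I * (g t : ℂ)) (I * g') x :=
  hg.ofReal_comp.const_mul I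

lemma painleveIII_rhs_I_mul (a g x : ℝ) :
    (I * a) ^ 2 / (I * g) - I * a / x + 4 * (I * g) ^ 3 - 4 / (I * g) =
      I * ((a ^ 2 / g - a / x - 4 * g ^ 3 + 4 / g : ℝ) : ℂ) := by
  have hI3 : I ^ 3 = -I := by rw [pow_succ, I_sq]; ring
  push_cast
  simp only [← div_div, div_I, mul_pow, I_sq, hI3]
  ring

lemma I_mul_ofReal_ne_two (r : ℝ) : I * (r : ℂ) ≠ 2 ∧ I * (r : ℂ) ≠ -2 := by
  constructor <;> intro h <;> simpa using congrArg re h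

/-- With `u, p, q` standing for `ψ, ψ', ψ''` at `x`, the conclusion is the radial sinh-Gordon
equation `(x d/dx)² ψ = -16 x² sinh ψ`. -/
lemma radial_sinhGordon_of_exp_half {u p q x : ℝ} (hx : x ≠ 0)
    (h : Real.exp (u / 2) * ((p / 2) ^ 2 + q / 2) =
      (Real.exp (u / 2) * (p / 2)) ^ 2 / Real.exp (u / 2) - Real.exp (u / 2) * (p / 2) / x
        - 4 * Real.exp (u / 2) ^ 3 + 4 / Real.exp (u / 2)) :
    x ^ 2 * q + x * p = -16 * x ^ 2 * Real.sinh u := by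
  set g := Real.exp (u / 2) with hg
  have hg0 : g ≠ 0 := (Real.exp_pos _).ne'
  have hexp : Real.exp u = g ^ 2 := by
    rw [hg, ← Real.exp_nat_mul]
    ring_nf
  rw [Real.sinh_eq, Real.exp_neg, hexp]
  field_simp at h ⊢
  linear_combination h

section ImaginaryAxis

variable {f : ℝ → ℂ} {ψ : ℝ → ℝ}

lemma eventuallyEq_I_mul_exp_half
    (hval : ∀ x > (0 : ℝ), f x = I * Real.exp (ψ x / 2)) {x : ℝ} (hx : 0 < x) :
    f =ᶠ[𝓝 x] fun t => I * (Real.exp (ψ t / 2) : ℂ) :=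
  eventually_of_mem (Ioi_mem_nhds hx) hval

lemma deriv_eq_I_mul_exp_half (hψ : ∀ x > (0 : ℝ), AnalyticAt ℝ ψ x)
    (hval : ∀ x > (0 : ℝ), f x = I * Real.exp (ψ x / 2)) {x : ℝ} (hx : 0 < x) :
    deriv f x = I * ((Real.exp (ψ x / 2) * (deriv ψ x / 2) : ℝ) : ℂ) := by
  rw [(eventuallyEq_I_mul_exp_half hval hx).deriv_eq]
  exact (hasDerivAt_I_mul_ofReal (hasDerivAt_exp_half (hψ x hx).differentiableAt)).deriv

lemma iteratedDeriv_two_eq_I_mul_exp_half (hψ : ∀ x > (0 : ℝ), AnalyticAt ℝ ψ x)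
    (hval : ∀ x > (0 : ℝ), f x = I * Real.exp (ψ x / 2)) {x : ℝ} (hx : 0 < x) :
    iteratedDeriv 2 f x = I * ((Real.exp (ψ x / 2) *
      ((deriv ψ x / 2) ^ 2 + iteratedDeriv 2 ψ x / 2) : ℝ) : ℂ) := by
  have hderiv : deriv f =ᶠ[𝓝 x]
      fun t => I * ((Real.exp (ψ t / 2) * (deriv ψ t / 2) : ℝ) : ℂ) :=
    eventually_of_mem (Ioi_mem_nhds hx) fun t ht => deriv_eq_I_mul_exp_half hψ hval ht
  have hψ' : HasDerivAt (fun t => deriv ψ t / 2) (iteratedDeriv 2 ψ x / 2) x := by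
    rw [iteratedDeriv_succ', iteratedDeriv_one]
    exact (hψ x hx).deriv.differentiableAt.hasDerivAt.div_const 2
  rw [iteratedDeriv_succ, iteratedDeriv_one, hderiv.deriv_eq]
  refine (hasDerivAt_I_mul_ofReal
    ((hasDerivAt_exp_half (hψ x hx).differentiableAt).mul hψ')).deriv.trans ?_
  ring_nf

end ImaginaryAxis

theorem stmt14_general (f : ℝ → ℂ) (ψ : ℝ → ℝ)
    (hψ : ∀ x > (0 : ℝ), AnalyticAt ℝ ψ x)
    (hval : ∀ x > (0 : ℝ), f x = Complex.I * Real.exp (ψ x / 2))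
    (hode : ∀ x > (0 : ℝ), iteratedDeriv 2 f x =
      (deriv f x) ^ 2 / f x - deriv f x / (x : ℂ) + 4 * (f x) ^ 3 - 4 / f x) :
    (∀ x > (0 : ℝ), x ^ 2 * iteratedDeriv 2 ψ x + x * deriv ψ x =
        -16 * x ^ 2 * Real.sinh (ψ x)) ∧
    (∀ x > (0 : ℝ), f x ≠ 0) ∧
    (∀ x > (0 : ℝ), deriv f x ≠ 2 ∧ deriv f x ≠ -2) := by
  refine ⟨fun x hx => ?_, fun x hx => ?_, fun x hx => ?_⟩
  · have h := hode x hx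
    rw [iteratedDeriv_two_eq_I_mul_exp_half hψ hval hx, deriv_eq_I_mul_exp_half hψ hval hx,
      hval x hx, painleveIII_rhs_I_mul] at h
    exact radial_sinhGordon_of_exp_half hx.ne'
      (ofReal_injective (mul_left_cancel₀ I_ne_zero h))
  · rw [hval x hx]
    exact mul_ne_zero I_ne_zero (ofReal_ne_zero.mpr (Real.exp_pos _).ne')
  · rw [deriv_eq_I_mul_exp_half hψ hval hx]
    exact I_mul_ofReal_ne_two _

/-- Let `f` be a real-analytic solution of `P_III(0,0,4,-4)` on `ℝ_{>0}` with values
in `i·ℝ_{>0}`, and write `f = i·e^{ψ/2}` with `ψ` real-analytic (i.e. `ψ = 2 log f - πi`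
is a real-valued branch). Then `ψ` satisfies `(x·d/dx)²ψ = -16·x²·sinh(ψ)`; moreover
`f` never vanishes and there is no point `x₀ > 0` with `∂ₓf(x₀) = ±2`. -/
theorem stmt14 (f : ℝ → ℂ) (ψ : ℝ → ℝ)
    (hf : ∀ x > (0 : ℝ), AnalyticAt ℝ f x)
    (hψ : ∀ x > (0 : ℝ), AnalyticAt ℝ ψ x)
    (hval : ∀ x > (0 : ℝ), f x = Complex.I * Real.exp (ψ x / 2))
    (hode : ∀ x > (0 : ℝ), iteratedDeriv 2 f x =
      (deriv f x) ^ 2 / f x - deriv f x / (x : ℂ) + 4 * (f x) ^ 3 - 4 / f x) :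
    (∀ x > (0 : ℝ), x ^ 2 * iteratedDeriv 2 ψ x + x * deriv ψ x =
        -16 * x ^ 2 * Real.sinh (ψ x)) ∧
    (∀ x > (0 : ℝ), f x ≠ 0) ∧
    (∀ x > (0 : ℝ), deriv f x ≠ 2 ∧ deriv f x ≠ -2) :=
  stmt14_general f ψ hψ hval hode
end
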